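/- arXiv:1809.07313 — 2 statements merged into one kernel-verified Lean document; each statement's English description precedes it below -/
import Mathlib

section
/- The limit as k → ∞ of log α(C₅[k]) / log k exists and equals 1, where C₅ is the 5-cycle and α(C₅[k]) is the independence number of the pebble configuration graph C₅[k]. -/
open Finset

/-- A configuration of `k` identical pebbles on the vertex set `V`. -/
def Config (V : Type*) [Fintype V] (k : ℕ) : Type _ :=
  {f : V → ℕ // ∑ v, f v = k}

/-- The pebble configuration graph `G[k]`: two distinct configurations are adjacent
iff there is a transport `m` moving each pebble along an edge of `G` or keeping it in place. -/
def PebbleGraph {V : Type*} [Fintype V] (G : SimpleGraph V) (k : ℕ) :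
    SimpleGraph (Config V k) where
  Adj f g := f ≠ g ∧ ∃ m : V → V → ℕ,
    (∀ u w, m u w ≠ 0 → u = w ∨ G.Adj u w) ∧
    (∀ u, ∑ w, m u w = f.1 u) ∧ (∀ u, ∑ w, m w u = g.1 u)
  symm := ⟨by
    rintro f g ⟨hne, m, h1, h2, h3⟩
    exact ⟨hne.symm, fun u w => m w u,
      fun u w h => (h1 w u h).imp Eq.symm fun h => G.adj_symm h, h3, h2⟩⟩
  loopless := ⟨fun f h => h.1 rfl⟩

/-- The independence number of a graph: the supremum of sizes of finite sets of
pairwise non-adjacent vertices. -/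
noncomputable def indepNum {W : Type*} (G : SimpleGraph W) : ℕ :=
  sSup {n | ∃ s : Finset W, (↑s : Set W).Pairwise (fun a b => ¬ G.Adj a b) ∧ s.card = n}

/-- The 5-cycle on vertices `Fin 5`, with `u` adjacent to `u + 1` (mod 5). -/
def C5 : SimpleGraph (Fin 5) where
  Adj u w := u ≠ w ∧ (w = u + 1 ∨ u = w + 1)
  symm := ⟨fun _ _ h => ⟨h.1.symm, h.2.symm⟩⟩
  loopless := ⟨fun _ h => h.1 rfl⟩

/-!
Write `N f v` for the number of pebbles of `f` on the closed neighbourhood of `v`. In any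
pebble graph, `f ~ g` forces `g ≤ N f`. On `C₅` the converse holds as well: if `f ≤ N g` and
`g ≤ N f` pointwise, the pebbles can be routed around the cycle by an integer flow.

Lower bound: the `k + 1` configurations with `i` pebbles on `v₁` and `k - i` on `v₃` (vertices `0`
and `2` of `Fin 5`) are pairwise non-adjacent, since `N f v₁ = f v₁` for each of them.

Upper bound: every configuration `f` satisfies `f ≤ x ≤ N f` for some `x` of the form
"`k - s` pebbles on both ends of an edge and `s` on the other three vertices", and there are
`5 (k + 1)` such `x`. Two configurations sandwiching the same `x` satisfy the criterion above, so
an independent set meets each such class at most once.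

Hence `k + 1 ≤ α(C₅[k]) ≤ 5 (k + 1)`.
-/

open Filter Topology Real

section IndependenceNumber

variable {W : Type*} (G : SimpleGraph W)

theorem card_le_indepNum {N : ℕ} (hN : ∀ t : Finset W, G.IsIndepSet t → #t ≤ N) {s : Finset W}
    (hs : G.IsIndepSet s) : #s ≤ indepNum G :=
  le_csSup ⟨N, by rintro _ ⟨t, ht, rfl⟩; exact hN t ht⟩ ⟨s, hs, rfl⟩

theorem indepNum_le_of_forall_card_le {N : ℕ} (hN : ∀ t : Finset W, G.IsIndepSet t → #t ≤ N) :
    indepNum G ≤ N :=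
  csSup_le ⟨0, ∅, by simp⟩ (by rintro _ ⟨t, ht, rfl⟩; exact hN t ht)

theorem card_le_card_of_isClique_fibers {β : Type*} (φ : W → β) (X : Finset β)
    (hφ : ∀ w, φ w ∈ X) (hfib : ∀ a b, a ≠ b → φ a = φ b → G.Adj a b) {t : Finset W}
    (ht : G.IsIndepSet t) : #t ≤ #X :=
  card_le_card_of_injOn φ (fun a _ => hφ a)
    fun a ha b hb hab => by_contra fun hne => ht ha hb hne (hfib a b hne hab)

end IndependenceNumber

theorem PebbleGraph.le_sum_of_adj {V : Type*} [Fintype V] {G : SimpleGraph V} {k : ℕ}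
    {f g : Config V k} (h : (PebbleGraph G k).Adj f g) {v : V} {S : Finset V}
    (hS : ∀ u, u = v ∨ G.Adj u v → u ∈ S) :
    g.1 v ≤ ∑ u ∈ S, f.1 u := by
  obtain ⟨-, m, hm, hrow, hcol⟩ := h
  calc g.1 v = ∑ u, m u v := (hcol v).symm
    _ = ∑ u ∈ S, m u v :=
      (sum_subset (subset_univ S) fun u _ hu => by_contra fun h0 => hu (hS u (hm u v h0))).symm
    _ ≤ ∑ u ∈ S, f.1 u :=
      sum_le_sum fun u _ => hrow u ▸ single_le_sum (fun _ _ => Nat.zero_le _) (mem_univ v)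

theorem exists_forall_le_forall_le {ι α : Type*} [Fintype ι] [Nonempty ι] [LinearOrder α]
    (L U : ι → α) (h : ∀ i j, L i ≤ U j) : ∃ t, (∀ i, L i ≤ t) ∧ ∀ j, t ≤ U j :=
  ⟨univ.sup' univ_nonempty L, fun i => le_sup' L (mem_univ i),
    fun j => sup'_le _ _ fun i _ => h i j⟩

theorem tendsto_log_div_log_of_le_of_le {a : ℕ → ℕ} {C : ℝ} (hlow : ∀ k, k ≤ a k)
    (hup : ∀ᶠ k in atTop, (a k : ℝ) ≤ C * k) :
    Tendsto (fun k => log (a k) / log k) atTop (𝓝 1) := by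
  have hlog : Tendsto (fun k : ℕ => log k) atTop atTop :=
    tendsto_log_atTop.comp tendsto_natCast_atTop_atTop
  have hC : Tendsto (fun k : ℕ => log C / log k + 1) atTop (𝓝 1) := by
    simpa using (tendsto_const_nhds.div_atTop hlog).add_const (1 : ℝ)
  refine tendsto_of_tendsto_of_tendsto_of_le_of_le' tendsto_const_nhds hC ?_ ?_ <;>
    filter_upwards [hup, eventually_ge_atTop 2] with k hk hk2
  all_goals
    have hk1 : (1 : ℝ) < k := by exact_mod_cast hk2
    have hlogk : 0 < log k := log_pos hk1
    have hka : (k : ℝ) ≤ a k := by exact_mod_cast hlow k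
  · rw [le_div_iff₀ hlogk, one_mul]
    exact log_le_log (by linarith) hka
  · have hCpos : 0 < C := pos_of_mul_pos_left (b := (k : ℝ)) (by linarith) (by linarith)
    rw [div_add_one hlogk.ne', div_le_div_iff_of_pos_right hlogk, ← log_mul hCpos.ne' (by linarith)]
    exact log_le_log (by linarith) hk

namespace C5

theorem adj_iff {u w : Fin 5} : C5.Adj u w ↔ w = u + 1 ∨ w = u - 1 := by
  change u ≠ w ∧ (w = u + 1 ∨ u = w + 1) ↔ _
  revert u w; decide

def closedNbhdSum (f : Fin 5 → ℕ) (v : Fin 5) : ℕ := f (v - 1) + f v + f (v + 1)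

variable {k : ℕ}

theorem adj_of_transport {f g : Config (Fin 5) k} (hne : f ≠ g) (stay right left : Fin 5 → ℕ)
    (hf : ∀ v, f.1 v = stay v + right v + left v)
    (hg : ∀ v, g.1 v = stay v + right (v - 1) + left (v + 1)) :
    (PebbleGraph C5 k).Adj f g := by
  refine ⟨hne, fun u w => (if w = u then stay u else 0) + (if w = u + 1 then right u else 0) +
    (if w = u - 1 then left u else 0), fun u w h => ?_, fun u => ?_, fun w => ?_⟩
  · by_contra! hw
    simp_all [adj_iff]
  · simp [sum_add_distrib, hf]
  · simp only [sum_add_distrib, eq_sub_iff_add_eq, ← sub_eq_iff_eq_add]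
    simp [hg]

/-- `a v` is the net number of pebbles crossing the edge from `v` to `v + 1`. -/
theorem adj_of_flow {f g : Config (Fin 5) k} (hne : f ≠ g) (a : Fin 5 → ℤ)
    (hg : ∀ v, (g.1 v : ℤ) = f.1 v - a v + a (v - 1))
    (hcap : ∀ v, (a v).toNat + (-a (v - 1)).toNat ≤ f.1 v) :
    (PebbleGraph C5 k).Adj f g :=
  adj_of_transport hne (fun v => f.1 v - (a v).toNat - (-a (v - 1)).toNat)
    (fun v => (a v).toNat) (fun v => (-a (v - 1)).toNat)
    (fun v => by have := hcap v; omega)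
    (fun v => by simp only [add_sub_cancel_right]; have := hcap v; have := hg v; omega)

theorem adj_of_le_closedNbhdSum {f g : Config (Fin 5) k} (hne : f ≠ g)
    (hfg : ∀ v, f.1 v ≤ closedNbhdSum g.1 v) (hgf : ∀ v, g.1 v ≤ closedNbhdSum f.1 v) :
    (PebbleGraph C5 k).Adj f g := by
  have hf := f.2
  have hg := g.2
  simp only [Fin.sum_univ_five] at hf hg
  have := hfg 0; have := hfg 1; have := hfg 2; have := hfg 3; have := hfg 4
  have := hgf 0; have := hgf 1; have := hgf 2; have := hgf 3; have := hgf 4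
  simp only [closedNbhdSum, Fin.isValue, Fin.reduceSub, Fin.reduceAdd] at *
  -- Net flows with divergence `f - g` are `t + s` for a free shift `t`; `hcap` bounds `t` from
  -- both sides, and the two bounds are compatible by the closed-neighbourhood inequalities.
  let d : Fin 5 → ℤ := fun v => f.1 v - g.1 v
  let s : Fin 5 → ℤ := ![0, d 1, d 1 + d 2, d 1 + d 2 + d 3, d 1 + d 2 + d 3 + d 4]
  have hs : ∀ v, s v - s (v - 1) = f.1 v - g.1 v := by
    intro v
    fin_cases v <;> simp [s, d]
    omega
  obtain ⟨t, hlow, hup⟩ := exists_forall_le_forall_le (fun v => -(f.1 v : ℤ) - s (v - 1))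
    (fun v => (f.1 v : ℤ) - s v)
    (by intro u v; fin_cases u <;> fin_cases v <;> simp [s, d] <;> omega)
  refine adj_of_flow hne (fun v => t + s v) (fun v => ?_) (fun v => ?_)
  · linarith [hs v]
  · have := hlow v; have := hup v; have := hs v; omega

theorem le_closedNbhdSum_of_adj {f g : Config (Fin 5) k} (h : (PebbleGraph C5 k).Adj f g)
    (v : Fin 5) : g.1 v ≤ closedNbhdSum f.1 v := by
  have hdistinct : v - 1 ∉ ({v, v + 1} : Finset (Fin 5)) ∧ v ≠ v + 1 := by revert v; decide
  have hS : ∀ u, u = v ∨ C5.Adj u v → u ∈ ({v - 1, v, v + 1} : Finset (Fin 5)) := by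
    simp only [adj_iff]; revert v; decide
  have := PebbleGraph.le_sum_of_adj h hS
  rwa [sum_insert hdistinct.1, sum_pair hdistinct.2, ← add_assoc] at this

theorem pebbleGraph_adj_iff {f g : Config (Fin 5) k} :
    (PebbleGraph C5 k).Adj f g ↔
      f ≠ g ∧ (∀ v, f.1 v ≤ closedNbhdSum g.1 v) ∧ ∀ v, g.1 v ≤ closedNbhdSum f.1 v :=
  ⟨fun h => ⟨h.1, le_closedNbhdSum_of_adj h.symm, le_closedNbhdSum_of_adj h⟩,
    fun ⟨hne, hfg, hgf⟩ => adj_of_le_closedNbhdSum hne hfg hgf⟩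

def edgePoint (k : ℕ) (v : Fin 5) (s : ℕ) : Fin 5 → ℕ :=
  fun w => if w = v ∨ w = v + 1 then k - s else s

theorem exists_edgePoint_between (f : Config (Fin 5) k) :
    ∃ v, ∃ s ≤ k, ∀ w, f.1 w ≤ edgePoint k v s w ∧ edgePoint k v s w ≤ closedNbhdSum f.1 w := by
  -- The edge joining a fullest vertex `v` to its fuller neighbour works.
  obtain ⟨v, hv⟩ := Finite.exists_max f.1
  have hf := f.2
  simp only [Fin.sum_univ_five] at hf
  have h0 := hv 0; have h1 := hv 1; have h2 := hv 2; have h3 := hv 3; have h4 := hv 4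
  rcases le_total (f.1 (v + 1)) (f.1 (v - 1)) with h | h <;>
    [refine ⟨v - 1, f.1 (v + 1) + f.1 (v + 2) + f.1 (v + 3), ?_, fun w => ?_⟩;
     refine ⟨v, f.1 (v + 2) + f.1 (v + 3) + f.1 (v + 4), ?_, fun w => ?_⟩] <;>
    fin_cases v <;> (try fin_cases w) <;>
    simp only [edgePoint, closedNbhdSum, Fin.isValue, Fin.reduceAdd, Fin.reduceSub, Fin.reduceEq,
      Fin.reduceFinMk, or_false, or_true, if_true, if_false] at h0 h1 h2 h3 h4 h ⊢ <;>
    omega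

theorem card_le_of_isIndepSet {t : Finset (Config (Fin 5) k)}
    (ht : (PebbleGraph C5 k).IsIndepSet t) : #t ≤ 5 * (k + 1) := by
  choose v s hs hpierce using exists_edgePoint_between (k := k)
  calc #t ≤ #(univ ×ˢ range (k + 1)) := by
        refine card_le_card_of_isClique_fibers _ (fun f => (v f, s f)) _
          (fun f => by simp [Nat.lt_succ_of_le (hs f)]) (fun a b hne hab => ?_) ht
        simp only [Prod.mk.injEq] at hab
        refine adj_of_le_closedNbhdSum hne (fun w => ?_) (fun w => ?_)
        · exact (hpierce a w).1.trans (hab.1 ▸ hab.2 ▸ (hpierce b w).2)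
        · exact (hpierce b w).1.trans (hab.1 ▸ hab.2 ▸ (hpierce a w).2)
    _ = 5 * (k + 1) := by simp

theorem indepNum_le : indepNum (PebbleGraph C5 k) ≤ 5 * (k + 1) :=
  indepNum_le_of_forall_card_le _ fun _ => card_le_of_isIndepSet

def pile (k : ℕ) (i : Fin (k + 1)) : Config (Fin 5) k :=
  ⟨![i, 0, k - i, 0, 0], by simp [Fin.sum_univ_five]; omega⟩

theorem pile_injective : Function.Injective (pile k) := fun _ _ h =>
  Fin.ext (congrFun (congrArg Subtype.val h) 0)

theorem not_adj_pile (i j : Fin (k + 1)) : ¬ (PebbleGraph C5 k).Adj (pile k i) (pile k j) := by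
  intro h
  have hji := le_closedNbhdSum_of_adj h 0
  have hij := le_closedNbhdSum_of_adj h.symm 0
  simp [closedNbhdSum, pile] at hij hji
  exact h.1 (congrArg (pile k) (Fin.ext (le_antisymm hij hji)))

theorem succ_le_indepNum : k + 1 ≤ indepNum (PebbleGraph C5 k) := by
  simpa using card_le_indepNum _ (fun _ => card_le_of_isIndepSet)
    (s := univ.map ⟨pile k, pile_injective⟩) (by simp [Set.Pairwise, not_adj_pile])

end C5

/-- The limit as `k → ∞` of `log α(C₅[k]) / log k` exists and equals `1`. -/
theorem tendsto_log_alpha_C5_pebble :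
    Filter.Tendsto
      (fun k : ℕ => Real.log (indepNum (PebbleGraph C5 k)) / Real.log k)
      Filter.atTop (nhds 1) := by
  refine tendsto_log_div_log_of_le_of_le (C := 10)
    (fun k => (Nat.le_succ k).trans C5.succ_le_indepNum) ?_
  filter_upwards [eventually_ge_atTop 1] with k hk
  have : indepNum (PebbleGraph C5 k) ≤ 10 * k := by linarith [C5.indepNum_le (k := k)]
  exact_mod_cast this
end

section
/- Let G be a finite simple graph with n ≥ 1 vertices, let v be a vertex of G, let N(v) denote the union of {v} with the set of neighbours of v, and let k, m be natural numbers. Suppose f and g are configurations of weight k on G such that: (i) Σ_{u ∈ N(v)} f(u) = Σ_{u ∈ N(v)} g(u) = m; (ii) f(v) ≥ k/n and g(v) ≥ k/n; (iii) for every vertex u, there is an integer b_u ≥ 0 with both f(u) and g(u) lying in the half-open interval [b_u·k/(2n²), (b_u+1)·k/(2n²)); and (iv) the restrictions of f and g to V ∖ N(v) are equal, or are adjacent as configurations of weight k − m in the pebble configuration graph (G ∖ N(v))[k − m] of the induced subgraph on V ∖ N(v). Then f and g are equal or adjacent in G[k]. -/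
open Finset

/-!
Inside `N(v)` the pebbles are routed through the centre `v`: every other vertex `u` of `N(v)`
keeps `min (f u) (g u)` pebbles, sends its surplus `f u - g u` to `v` and receives its deficit
`g u - f u` from `v`. Since `f u` and `g u` lie in a common interval of length `k/(2n²)`, the
total deficit is at most `n · k/(2n²) ≤ k/n ≤ f v`, so `v` can pay it out; the equal totals on
`N(v)` make the count at `v` come out right. Outside `N(v)` the given transport of
`(G ∖ N(v))[k − m]` is used unchanged, and the two transports add up.
-/

theorem Fintype.sum_dite_mem {V : Type*} [Fintype V] {s : Set V} [Fintype s]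
    [DecidablePred (· ∈ s)] (F : s → ℕ) :
    ∑ u, (if h : u ∈ s then F ⟨u, h⟩ else 0) = ∑ x : s, F x := by
  rw [← Fintype.sum_subtype_add_sum_subtype (· ∈ s),
    Fintype.sum_eq_zero (fun i : {x // x ∉ s} => _) fun i => dif_neg i.2, add_zero]
  simp only [Subtype.coe_prop, dite_true, Subtype.coe_eta]
  convert rfl

section Transport

variable {V : Type*} [Fintype V] {G : SimpleGraph V}

def IsTransport (G : SimpleGraph V) (m : V → V → ℕ) (f g : V → ℕ) : Prop :=
  (∀ u w, m u w ≠ 0 → u = w ∨ G.Adj u w) ∧ (∀ u, ∑ w, m u w = f u) ∧ (∀ w, ∑ u, m u w = g w)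

theorem pebbleGraph_adj_iff {k : ℕ} {f g : Config V k} :
    (PebbleGraph G k).Adj f g ↔ f ≠ g ∧ ∃ m, IsTransport G m f.1 g.1 :=
  Iff.rfl

namespace IsTransport

theorem refl [DecidableEq V] (f : V → ℕ) :
    IsTransport G (fun u w => if u = w then f u else 0) f f :=
  ⟨fun u w h => .inl (of_not_not fun huw => h (if_neg huw)),
    fun u => by simp, fun w => by simp⟩

theorem transpose {m : V → V → ℕ} {f g : V → ℕ} (h : IsTransport G m f g) :
    IsTransport G (fun u w => m w u) g f :=
  ⟨fun u w huw => (h.1 w u huw).imp Eq.symm G.adj_symm, h.2.2, h.2.1⟩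

theorem add {m₁ m₂ : V → V → ℕ} {f₁ g₁ f₂ g₂ : V → ℕ} (h₁ : IsTransport G m₁ f₁ g₁)
    (h₂ : IsTransport G m₂ f₂ g₂) : IsTransport G (m₁ + m₂) (f₁ + f₂) (g₁ + g₂) := by
  refine ⟨fun u w huw => ?_, fun u => ?_, fun w => ?_⟩
  · by_cases h : m₁ u w = 0
    · exact h₂.1 u w (by simpa [h] using huw)
    · exact h₁.1 u w h
  · simp [Finset.sum_add_distrib, h₁.2.1, h₂.2.1]
  · simp [Finset.sum_add_distrib, h₁.2.2, h₂.2.2]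

theorem gather [DecidableEq V] {v : V} {a : V → ℕ} (ha : ∀ u, a u ≠ 0 → u = v ∨ G.Adj u v) :
    IsTransport G (fun u w => if w = v then a u else 0) a (Pi.single v (∑ u, a u)) := by
  refine ⟨fun u w huw => ?_, fun u => by simp, fun w => ?_⟩
  · by_cases hw : w = v
    · subst hw; exact ha u (by simpa using huw)
    · simp [hw] at huw
  · by_cases hw : w = v
    · subst hw; simp
    · simp [hw]

end IsTransport

theorem exists_isTransport_of_eq_or_adj {k : ℕ} {f g : Config V k}
    (h : f = g ∨ (PebbleGraph G k).Adj f g) : ∃ m, IsTransport G m f.1 g.1 := by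
  classical
  rcases h with rfl | h
  · exact ⟨_, .refl f.1⟩
  · exact (pebbleGraph_adj_iff.1 h).2

theorem exists_isTransport_indicator_of_induce {s : Set V} [Fintype s] {m : s → s → ℕ}
    {f g : V → ℕ} (h : IsTransport (G.induce s) m (fun x => f x) (fun x => g x)) :
    ∃ m', IsTransport G m' (s.indicator f) (s.indicator g) := by
  classical
  refine ⟨fun u w => if hs : u ∈ s ∧ w ∈ s then m ⟨u, hs.1⟩ ⟨w, hs.2⟩ else 0,
    fun u w huw => ?_, fun u => ?_, fun w => ?_⟩
  · obtain ⟨hs, hm⟩ : ∃ hs : u ∈ s ∧ w ∈ s, m ⟨u, hs.1⟩ ⟨w, hs.2⟩ ≠ 0 := by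
      by_contra! h'
      exact huw (dite_eq_right_iff.2 h')
    exact (h.1 _ _ hm).imp (congrArg Subtype.val) id
  · by_cases hu : u ∈ s
    · rw [Set.indicator_of_mem hu]
      refine Eq.trans ?_ (h.2.1 ⟨u, hu⟩)
      rw [← Fintype.sum_dite_mem]
      simp only [hu, true_and]
    · simp [hu]
  · by_cases hw : w ∈ s
    · rw [Set.indicator_of_mem hw]
      refine Eq.trans ?_ (h.2.2 ⟨w, hw⟩)
      rw [← Fintype.sum_dite_mem]
      simp only [hw, and_true]
    · simp [hw]

theorem exists_isTransport_indicator_of_star [DecidableEq V] {v : V} {S : Finset V}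
    (hv : v ∈ S) (hS : ∀ u ∈ S.erase v, G.Adj u v) {f g : V → ℕ}
    (hsum : ∑ u ∈ S, f u = ∑ u ∈ S, g u) (hD : ∑ u ∈ S.erase v, (g u - f u) ≤ f v) :
    ∃ m, IsTransport G m ((S : Set V).indicator f) ((S : Set V).indicator g) := by
  set T : Set V := ↑(S.erase v)
  have hT : ∀ h : V → ℕ, ∀ u, T.indicator h u ≠ 0 → u = v ∨ G.Adj u v :=
    fun h u hu => .inr (hS u (Set.mem_of_indicator_ne_zero hu))
  have hsumT : ∀ h : V → ℕ, ∑ u, T.indicator h u = ∑ u ∈ S.erase v, h u :=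
    fun h => Finset.sum_indicator_subset h (Finset.subset_univ _)
  set A := ∑ u ∈ S.erase v, (f u - g u)
  set D := ∑ u ∈ S.erase v, (g u - f u)
  have hAD : A + ∑ u ∈ S.erase v, g u = D + ∑ u ∈ S.erase v, f u := by
    simp only [A, D, ← Finset.sum_add_distrib]
    exact Finset.sum_congr rfl fun u _ => by omega
  have hfS := Finset.add_sum_erase S f hv
  have hgS := Finset.add_sum_erase S g hv
  set c := T.indicator (f ⊓ g) + Pi.single v (f v - D)
  -- `c` stays put, the surpluses `f - g` gather at `v`, the deficits `g - f` are paid out by `v`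
  have key := (((IsTransport.refl c).add (IsTransport.gather (hT (f - g)))).add
    (IsTransport.gather (hT (g - f))).transpose)
  rw [hsumT, hsumT] at key
  simp only [Pi.sub_apply] at key
  have hf : (S : Set V).indicator f = c + T.indicator (f - g) + Pi.single v D := by
    funext u
    by_cases huv : u = v
    · subst huv; simp [c, T, hv]; omega
    · by_cases hu : u ∈ S <;> simp [c, T, hu, huv]; omega
  have hg : (S : Set V).indicator g = c + Pi.single v A + T.indicator (g - f) := by
    funext u
    by_cases huv : u = v
    · subst huv; simp [c, T, hv]; omega
    · by_cases hu : u ∈ S <;> simp [c, T, hu, huv]; omega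
  rw [hf, hg]
  exact ⟨_, key⟩

end Transport

theorem sum_tsub_le_card_mul {ι : Type*} (s : Finset ι) {f g : ι → ℕ} {ε : ℝ} (hε : 0 ≤ ε)
    (h : ∀ i ∈ s, ∃ a : ℝ, a ≤ f i ∧ (g i : ℝ) < a + ε) :
    ((∑ i ∈ s, (g i - f i) : ℕ) : ℝ) ≤ s.card * ε := by
  rw [Nat.cast_sum, ← nsmul_eq_mul]
  refine Finset.sum_le_card_nsmul _ _ _ fun i hi => ?_
  obtain ⟨a, hf, hg⟩ := h i hi
  rcases le_total (f i) (g i) with hfg | hgf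
  · rw [Nat.cast_sub hfg]; linarith
  · rwa [Nat.sub_eq_zero_of_le hgf, Nat.cast_zero]

theorem sum_tsub_le_div_card {V : Type*} [Fintype V] (s : Finset V) {f g : V → ℕ} (k : ℕ)
    (hb : ∀ u ∈ s, ∃ b : ℕ, (b : ℝ) * k / (2 * Fintype.card V ^ 2) ≤ f u ∧
      (g u : ℝ) < (b + 1) * k / (2 * Fintype.card V ^ 2)) :
    ((∑ u ∈ s, (g u - f u) : ℕ) : ℝ) ≤ k / Fintype.card V := by
  set n : ℝ := (Fintype.card V : ℝ)
  have hε : (0 : ℝ) ≤ k / (2 * n ^ 2) := by positivity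
  have hbucket := sum_tsub_le_card_mul s hε fun u hu => by
    obtain ⟨b, hf, hg⟩ := hb u hu
    exact ⟨_, hf, hg.trans_eq (by ring)⟩
  have hcard : (s.card : ℝ) ≤ n := Nat.cast_le.2 (Finset.card_le_univ s)
  calc _ ≤ s.card * (k / (2 * n ^ 2)) := hbucket
    _ ≤ n * (k / (2 * n ^ 2)) := by gcongr
    _ = k / n / 2 := by
      rcases eq_or_ne n 0 with h0 | h0
      · simp [h0]
      · field_simp
    _ ≤ k / n := by linarith [show (0 : ℝ) ≤ k / n by positivity]

theorem eq_or_adj_of_chunk_general {V : Type*} [Fintype V] [DecidableEq V]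
    (G : SimpleGraph V) [DecidableRel G.Adj] (v : V) (k m : ℕ) (f g : Config V k)
    (hfm : ∑ u ∈ Finset.univ.filter (fun u => u = v ∨ G.Adj v u), f.1 u = m)
    (hgm : ∑ u ∈ Finset.univ.filter (fun u => u = v ∨ G.Adj v u), g.1 u = m)
    (hfv : (k : ℝ) / (Fintype.card V : ℝ) ≤ (f.1 v : ℝ))
    (hb : ∀ u : V, ∃ b : ℕ,
      ((b : ℝ) * k / (2 * (Fintype.card V : ℝ) ^ 2) ≤ (f.1 u : ℝ) ∧
        (f.1 u : ℝ) < ((b : ℝ) + 1) * k / (2 * (Fintype.card V : ℝ) ^ 2)) ∧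
      ((b : ℝ) * k / (2 * (Fintype.card V : ℝ) ^ 2) ≤ (g.1 u : ℝ) ∧
        (g.1 u : ℝ) < ((b : ℝ) + 1) * k / (2 * (Fintype.card V : ℝ) ^ 2)))
    (hf' : ∑ u : {u : V | ¬(u = v ∨ G.Adj v u)}, f.1 u.1 = k - m)
    (hg' : ∑ u : {u : V | ¬(u = v ∨ G.Adj v u)}, g.1 u.1 = k - m)
    (hrest :
      (⟨fun u => f.1 u.1, hf'⟩ :
          Config {u : V | ¬(u = v ∨ G.Adj v u)} (k - m)) =
        ⟨fun u => g.1 u.1, hg'⟩ ∨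
      (PebbleGraph (G.induce {u : V | ¬(u = v ∨ G.Adj v u)}) (k - m)).Adj
        ⟨fun u => f.1 u.1, hf'⟩ ⟨fun u => g.1 u.1, hg'⟩) :
    f = g ∨ (PebbleGraph G k).Adj f g := by
  set S := Finset.univ.filter (fun u => u = v ∨ G.Adj v u)
  have hD : ∑ u ∈ S.erase v, (g.1 u - f.1 u) ≤ f.1 v := by
    refine Nat.cast_le.1 ((sum_tsub_le_div_card (S.erase v) k fun u _ => ?_).trans hfv)
    obtain ⟨b, ⟨hf, -⟩, -, hg⟩ := hb u
    exact ⟨b, hf, hg⟩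
  obtain ⟨mIn, hIn⟩ := exists_isTransport_indicator_of_star (by simp [S])
    (fun u hu => ((Finset.mem_filter.1 (Finset.mem_of_mem_erase hu)).2.resolve_left
      (Finset.ne_of_mem_erase hu)).symm) (hfm.trans hgm.symm) hD
  obtain ⟨_, hRest⟩ := exists_isTransport_of_eq_or_adj hrest
  obtain ⟨mOut, hOut⟩ := exists_isTransport_indicator_of_induce hRest
  have hcompl : {u | ¬(u = v ∨ G.Adj v u)} = (S : Set V)ᶜ := by ext; simp [S]
  rw [hcompl] at hOut
  by_cases hfg : f = g
  · exact .inl hfg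
  · refine .inr (pebbleGraph_adj_iff.2 ⟨hfg, mIn + mOut, ?_⟩)
    simpa only [Set.indicator_self_add_compl] using hIn.add hOut

/-- Key step of the induction: if `f` and `g` are weight-`k` configurations putting the
same total weight `m` on the closed neighbourhood `N(v)`, both putting at least `k/n`
pebbles on `v`, with all their values falling in the same intervals
`[bᵤ·k/(2n²), (bᵤ+1)·k/(2n²))`, and whose restrictions to `V ∖ N(v)` are equal or
adjacent in `(G ∖ N(v))[k − m]`, then `f` and `g` are equal or adjacent in `G[k]`. -/
theorem eq_or_adj_of_chunk {V : Type*} [Fintype V] [DecidableEq V] [Nonempty V]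
    (G : SimpleGraph V) [DecidableRel G.Adj] (v : V) (k m : ℕ) (f g : Config V k)
    (hfm : ∑ u ∈ Finset.univ.filter (fun u => u = v ∨ G.Adj v u), f.1 u = m)
    (hgm : ∑ u ∈ Finset.univ.filter (fun u => u = v ∨ G.Adj v u), g.1 u = m)
    (hfv : (k : ℝ) / (Fintype.card V : ℝ) ≤ (f.1 v : ℝ))
    (hgv : (k : ℝ) / (Fintype.card V : ℝ) ≤ (g.1 v : ℝ))
    (hb : ∀ u : V, ∃ b : ℕ,
      ((b : ℝ) * k / (2 * (Fintype.card V : ℝ) ^ 2) ≤ (f.1 u : ℝ) ∧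
        (f.1 u : ℝ) < ((b : ℝ) + 1) * k / (2 * (Fintype.card V : ℝ) ^ 2)) ∧
      ((b : ℝ) * k / (2 * (Fintype.card V : ℝ) ^ 2) ≤ (g.1 u : ℝ) ∧
        (g.1 u : ℝ) < ((b : ℝ) + 1) * k / (2 * (Fintype.card V : ℝ) ^ 2)))
    (hf' : ∑ u : {u : V | ¬(u = v ∨ G.Adj v u)}, f.1 u.1 = k - m)
    (hg' : ∑ u : {u : V | ¬(u = v ∨ G.Adj v u)}, g.1 u.1 = k - m)
    (hrest :
      (⟨fun u => f.1 u.1, hf'⟩ :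
          Config {u : V | ¬(u = v ∨ G.Adj v u)} (k - m)) =
        ⟨fun u => g.1 u.1, hg'⟩ ∨
      (PebbleGraph (G.induce {u : V | ¬(u = v ∨ G.Adj v u)}) (k - m)).Adj
        ⟨fun u => f.1 u.1, hf'⟩ ⟨fun u => g.1 u.1, hg'⟩) :
    f = g ∨ (PebbleGraph G k).Adj f g :=
  eq_or_adj_of_chunk_general G v k m f g hfm hgm hfv hb hf' hg' hrest
end
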